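/- arXiv:1905.07662 — 4 statements merged into one kernel-verified Lean document; each statement's English description precedes it below -/
import Mathlib

section
/- Every region-based agnostic test is logically consistent: for any nonempty set S⊆Θ, the test that accepts H when S⊆H, rejects H when S⊆Θ∖H, and is otherwise undecided, satisfies invertibility, monotonicity, strong union consonance, strong intersection consonance, and accepts Θ. -/
open Classical in
noncomputable def regionTest {Θ : Type*} (S : Set Θ) (H : Set Θ) : ℝ :=
  if S ⊆ H then 0 else if S ∩ H = ∅ then 1 else 1/2

lemma rt_eq_zero {Θ : Type*} {S H : Set Θ} :
    regionTest S H = 0 ↔ S ⊆ H := by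
  unfold regionTest
  by_cases h1 : S ⊆ H
  · simp [h1]
  · by_cases h2 : S ∩ H = ∅ <;> simp [h1, h2] <;> norm_num

lemma rt_eq_one {Θ : Type*} {S H : Set Θ} (hS : S.Nonempty) :
    regionTest S H = 1 ↔ S ∩ H = ∅ := by
  unfold regionTest
  by_cases h1 : S ⊆ H
  · simp only [h1, if_true]
    constructor
    · intro h; norm_num at h
    · intro he
      obtain ⟨x, hx⟩ := hS
      have : x ∈ S ∩ H := ⟨hx, h1 hx⟩
      rw [he] at this; exact absurd this (Set.notMem_empty x)
  · by_cases h2 : S ∩ H = ∅ <;> simp [h1, h2] <;> norm_num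

lemma rt_eq_half {Θ : Type*} {S H : Set Θ} :
    regionTest S H = 1/2 ↔ (¬ S ⊆ H ∧ S ∩ H ≠ ∅) := by
  unfold regionTest
  by_cases h1 : S ⊆ H
  · simp only [h1, if_true, not_true, false_and]
    norm_num
  · by_cases h2 : S ∩ H = ∅ <;> simp [h1, h2] <;> norm_num

theorem stmt_3 {Θ : Type*} (S : Set Θ) (hS : S.Nonempty) :
    (∀ H : Set Θ, (regionTest S H = 0 ↔ regionTest S Hᶜ = 1) ∧
      (regionTest S H = 1/2 ↔ regionTest S Hᶜ = 1/2)) ∧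
    (∀ H H' : Set Θ, H ⊆ H' →
      (regionTest S H = 0 → regionTest S H' = 0) ∧
      (regionTest S H < 1 → regionTest S H' < 1)) ∧
    (∀ (ι : Type) (H : ι → Set Θ), (∀ i, regionTest S (H i) = 1) →
      regionTest S (⋃ i, H i) = 1) ∧
    (∀ (ι : Type) (H : ι → Set Θ), (∀ i, regionTest S (H i) = 0) →
      regionTest S (⋂ i, H i) = 0) ∧
    regionTest S Set.univ = 0 := by
  have key : ∀ H : Set Θ, S ∩ Hᶜ = ∅ ↔ S ⊆ H := by
    intro H; rw [← Set.diff_eq, Set.diff_eq_empty]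
  refine ⟨?_, ?_, ?_, ?_, ?_⟩
  · intro H
    constructor
    · rw [rt_eq_zero, rt_eq_one hS, key]
    · rw [rt_eq_half, rt_eq_half]
      have key2 : S ∩ H = ∅ ↔ S ⊆ Hᶜ := by
        rw [← key Hᶜ, compl_compl]
      constructor
      · rintro ⟨h1, h2⟩
        exact ⟨fun h => h2 (key2.mpr h), fun h => h1 ((key H).mp h)⟩
      · rintro ⟨h1, h2⟩
        exact ⟨fun h => h2 ((key H).mpr h), fun h => h1 (key2.mp h)⟩
  · intro H H' hHH'
    constructor
    · rw [rt_eq_zero, rt_eq_zero]; exact fun h => h.trans hHH'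
    · intro h
      have hne : S ∩ H ≠ ∅ := by
        intro he
        rw [(rt_eq_one hS).mpr he] at h
        exact lt_irrefl 1 h
      have hne' : S ∩ H' ≠ ∅ := by
        intro he
        apply hne
        ext x; simp only [Set.mem_inter_iff, Set.mem_empty_iff_false, iff_false]
        rintro ⟨hx, hxH⟩
        have : x ∈ S ∩ H' := ⟨hx, hHH' hxH⟩
        rw [he] at this; exact this
      unfold regionTest
      by_cases h1 : S ⊆ H'
      · simp [h1]
      · by_cases h2 : S ∩ H' = ∅
        · exact absurd h2 hne'
        · simp [h1, h2]; norm_num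
  · intro ι H h
    rw [rt_eq_one hS]
    ext x; simp only [Set.mem_inter_iff, Set.mem_iUnion, Set.mem_empty_iff_false, iff_false]
    rintro ⟨hx, i, hxi⟩
    have : x ∈ S ∩ H i := ⟨hx, hxi⟩
    rw [(rt_eq_one hS).mp (h i)] at this; exact this
  · intro ι H h
    rw [rt_eq_zero]
    intro x hx
    simp only [Set.mem_iInter]
    exact fun i => (rt_eq_zero.mp (h i)) hx
  · exact rt_eq_zero.mpr (Set.subset_univ S)
end

section
/- If an agnostic test is logically consistent and hypotheses H₁ and H₂ are both decided (L(H₁)≠0.5 and L(H₂)≠0.5), then L(Θ∖(H₁∩H₂))=0 if and only if it is not the case that both L(H₁)=0 and L(H₂)=0. -/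
/-! If both hypotheses are rejected, intersection consonance rejects `H₁ ∩ H₂` and
invertibility accepts its complement. Otherwise, being decided, one of them, say `H`, is
accepted; invertibility rejects `Hᶜ`, and monotonicity carries the rejection up to
`(H₁ ∩ H₂)ᶜ ⊇ Hᶜ`. -/

section AgnosticTest

variable {Θ : Type*} (L : Set Θ → ℝ)

lemma eq_one_of_ne_half_of_ne_zero
    (hrange : ∀ H : Set Θ, L H = 0 ∨ L H = 1/2 ∨ L H = 1)
    {H : Set Θ} (hhalf : L H ≠ 1/2) (hzero : L H ≠ 0) : L H = 1 := by
  rcases hrange H with h | h | h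
  · exact absurd h hzero
  · exact absurd h hhalf
  · exact h

lemma compl_eq_zero_of_eq_one
    (hinv : ∀ H : Set Θ, (L H = 0 ↔ L Hᶜ = 1) ∧ (L H = 1/2 ↔ L Hᶜ = 1/2))
    {H : Set Θ} (h : L H = 1) : L Hᶜ = 0 :=
  (hinv Hᶜ).1.mpr (by rwa [compl_compl])

lemma inter_eq_zero
    (hinter : ∀ (ι : Type) (H : ι → Set Θ), (∀ i, L (H i) = 0) → L (⋂ i, H i) = 0)
    {H₁ H₂ : Set Θ} (h₁ : L H₁ = 0) (h₂ : L H₂ = 0) : L (H₁ ∩ H₂) = 0 := by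
  rw [Set.inter_eq_iInter]
  exact hinter Bool _ fun b => by cases b <;> assumption

lemma compl_inter_eq_zero_of_eq_one
    (hinv : ∀ H : Set Θ, (L H = 0 ↔ L Hᶜ = 1) ∧ (L H = 1/2 ↔ L Hᶜ = 1/2))
    (hmono : ∀ H H' : Set Θ, H ⊆ H' → (L H = 0 → L H' = 0) ∧ (L H < 1 → L H' < 1))
    {H : Set Θ} (H' : Set Θ) (h : L H = 1) : L (H ∩ H')ᶜ = 0 :=
  (hmono Hᶜ _ (Set.compl_subset_compl.mpr Set.inter_subset_left)).1
    (compl_eq_zero_of_eq_one L hinv h)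

end AgnosticTest

theorem stmt_4_general {Θ : Type*} (L : Set Θ → ℝ)
    (hrange : ∀ H : Set Θ, L H = 0 ∨ L H = 1/2 ∨ L H = 1)
    (hinv : ∀ H : Set Θ, (L H = 0 ↔ L Hᶜ = 1) ∧ (L H = 1/2 ↔ L Hᶜ = 1/2))
    (hmono : ∀ H H' : Set Θ, H ⊆ H' → (L H = 0 → L H' = 0) ∧ (L H < 1 → L H' < 1))
    (hinter : ∀ (ι : Type) (H : ι → Set Θ), (∀ i, L (H i) = 0) → L (⋂ i, H i) = 0)
    (H₁ H₂ : Set Θ) (h₁ : L H₁ ≠ 1/2) (h₂ : L H₂ ≠ 1/2) :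
    L (H₁ ∩ H₂)ᶜ = 0 ↔ ¬ (L H₁ = 0 ∧ L H₂ = 0) := by
  constructor
  · rintro hnand ⟨hz₁, hz₂⟩
    have hone : L (H₁ ∩ H₂)ᶜ = 1 := (hinv _).1.mp (inter_eq_zero L hinter hz₁ hz₂)
    norm_num [hnand] at hone
  · intro hnot
    by_cases hz₁ : L H₁ = 0
    · have hone : L H₂ = 1 :=
        eq_one_of_ne_half_of_ne_zero L hrange h₂ fun hz₂ => hnot ⟨hz₁, hz₂⟩
      rw [Set.inter_comm]
      exact compl_inter_eq_zero_of_eq_one L hinv hmono H₁ hone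
    · exact compl_inter_eq_zero_of_eq_one L hinv hmono H₂
        (eq_one_of_ne_half_of_ne_zero L hrange h₁ hz₁)

theorem stmt_4 {Θ : Type*} (L : Set Θ → ℝ)
    (hrange : ∀ H : Set Θ, L H = 0 ∨ L H = 1/2 ∨ L H = 1)
    (hinv : ∀ H : Set Θ, (L H = 0 ↔ L Hᶜ = 1) ∧ (L H = 1/2 ↔ L Hᶜ = 1/2))
    (hmono : ∀ H H' : Set Θ, H ⊆ H' → (L H = 0 → L H' = 0) ∧ (L H < 1 → L H' < 1))
    (hunion : ∀ (ι : Type) (H : ι → Set Θ), (∀ i, L (H i) = 1) → L (⋃ i, H i) = 1)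
    (hinter : ∀ (ι : Type) (H : ι → Set Θ), (∀ i, L (H i) = 0) → L (⋂ i, H i) = 0)
    (huniv : L Set.univ = 0)
    (H₁ H₂ : Set Θ) (h₁ : L H₁ ≠ 1/2) (h₂ : L H₂ ≠ 1/2) :
    L (H₁ ∩ H₂)ᶜ = 0 ↔ ¬ (L H₁ = 0 ∧ L H₂ = 0) :=
  stmt_4_general L hrange hinv hmono hinter H₁ H₂ h₁ h₂
end

section
/- The epistemic value of a hypothesis is the supremum of the epistemic values of its points: ev(H|x) = sup_{θ₀∈H} ev({θ₀}|x), where ev(H|x) = 1 − P(T(H)|x) and T(H) = {θ₁∈Θ : ∀θ₀∈H, s(θ₁|x) > s(θ₀|x)}. -/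
open MeasureTheory

def tangentSet {Θ : Type*} (s : Θ → ℝ) (H : Set Θ) : Set Θ :=
  {θ₁ | ∀ θ₀ ∈ H, s θ₁ > s θ₀}

noncomputable def ev {Θ : Type*} [MeasurableSpace Θ] (P : Measure Θ) (s : Θ → ℝ)
    (H : Set Θ) : ENNReal :=
  1 - P (tangentSet s H)

/-!
Over a nonempty `H`, the tangent set `T(H)` is the intersection of the superlevel sets
`T({θ₀}) = {s > s θ₀}`, `θ₀ ∈ H`, and these form a chain. Since `ℝ` is second countable, some
sequence in `H` is cofinal for `s`, so `T(H)` is a countable decreasing intersection of them and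
continuity from above gives `P(T(H)) = inf_{θ₀ ∈ H} P(T({θ₀}))`; subtracting from `1` turns this
infimum into the supremum of the `ev({θ₀})`.
-/

open Set

theorem exists_countable_subset_forall_exists_le {α : Type*} [TopologicalSpace α]
    [SecondCountableTopology α] [LinearOrder α] [ClosedIicTopology α] (A : Set α) :
    ∃ D ⊆ A, D.Countable ∧ ∀ a ∈ A, ∃ d ∈ D, a ≤ d := by
  obtain ⟨D, hD, hdense, -, htop⟩ := exists_countable_dense_bot_top A
  refine ⟨(↑) '' D, Subtype.coe_image_subset A D, hD.image _, fun a ha => ?_⟩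
  by_cases hmax : IsTop (⟨a, ha⟩ : A)
  · exact ⟨a, ⟨_, htop _ hmax, rfl⟩, le_rfl⟩
  · simp only [IsTop, not_forall, not_le] at hmax
    obtain ⟨b, hab⟩ := hmax
    obtain ⟨d, hdD, had⟩ := hdense.exists_mem_open
      (isOpen_Ioi.preimage continuous_subtype_val : IsOpen {y : A | a < y}) ⟨b, hab⟩
    exact ⟨d, ⟨d, hdD, rfl⟩, had.le⟩

theorem exists_seq_mem_forall_exists_le_comp {β α : Type*} [TopologicalSpace α]
    [SecondCountableTopology α] [LinearOrder α] [ClosedIicTopology α] (f : β → α)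
    {H : Set β} (hH : H.Nonempty) :
    ∃ u : ℕ → β, (∀ n, u n ∈ H) ∧ ∀ x ∈ H, ∃ n, f x ≤ f (u n) := by
  obtain ⟨D, hDH, hD, hcof⟩ := exists_countable_subset_forall_exists_le (f '' H)
  obtain ⟨x, hx⟩ := hH
  obtain ⟨d, hd, -⟩ := hcof _ (mem_image_of_mem f hx)
  obtain ⟨v, rfl⟩ := hD.exists_eq_range ⟨d, hd⟩
  choose u huH hu using fun n => hDH (mem_range_self n)
  refine ⟨u, huH, fun x hx => ?_⟩
  obtain ⟨_, ⟨n, rfl⟩, hn⟩ := hcof _ (mem_image_of_mem f hx)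
  exact ⟨n, (hu n).symm ▸ hn⟩

section tangentSet

variable {Θ : Type*} (s : Θ → ℝ)

theorem tangentSet_singleton (θ₀ : Θ) : tangentSet s {θ₀} = {θ₁ | s θ₀ < s θ₁} := by
  simp [tangentSet]

theorem tangentSet_singleton_subset_of_le {θ θ' : Θ} (h : s θ ≤ s θ') :
    tangentSet s {θ'} ⊆ tangentSet s {θ} := by
  simp only [tangentSet_singleton]
  exact fun _ h' => h.trans_lt h'

theorem tangentSet_eq_iInter_of_forall_exists_le {H : Set Θ} {u : ℕ → Θ} (huH : ∀ n, u n ∈ H)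
    (hu : ∀ θ ∈ H, ∃ n, s θ ≤ s (u n)) : tangentSet s H = ⋂ n, tangentSet s {u n} := by
  ext θ₁
  simp only [mem_iInter, tangentSet_singleton, mem_ofPred_eq]
  refine ⟨fun h n => h _ (huH n), fun h θ hθ => ?_⟩
  obtain ⟨n, hn⟩ := hu θ hθ
  exact hn.trans_lt (h n)

theorem measure_tangentSet_eq_iInf [MeasurableSpace Θ] (P : Measure Θ)
    [IsFiniteMeasure P] (hmeas : ∀ H : Set Θ, MeasurableSet (tangentSet s H))
    {H : Set Θ} (hH : H.Nonempty) :
    P (tangentSet s H) = ⨅ θ₀ ∈ H, P (tangentSet s {θ₀}) := by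
  refine le_antisymm (le_iInf₂ fun θ₀ hθ₀ => measure_mono fun θ₁ h => ?_) ?_
  · simpa [tangentSet_singleton] using h θ₀ hθ₀
  obtain ⟨u, huH, hu⟩ := exists_seq_mem_forall_exists_le_comp s hH
  have hdir : Directed (· ⊇ ·) fun n => tangentSet s {u n} := fun m n =>
    (le_total (s (u m)) (s (u n))).elim
      (fun h => ⟨n, tangentSet_singleton_subset_of_le s h, subset_rfl⟩)
      (fun h => ⟨m, subset_rfl, tangentSet_singleton_subset_of_le s h⟩)
  calc ⨅ θ₀ ∈ H, P (tangentSet s {θ₀})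
      ≤ ⨅ n, P (tangentSet s {u n}) := le_iInf fun n => iInf₂_le _ (huH n)
    _ = P (tangentSet s H) := by
      rw [tangentSet_eq_iInter_of_forall_exists_le s huH hu,
        hdir.measure_iInter (fun n => (hmeas _).nullMeasurableSet) ⟨0, measure_ne_top P _⟩]

end tangentSet

theorem stmt_7_general {Θ : Type*} [MeasurableSpace Θ] (P : Measure Θ) [IsProbabilityMeasure P]
    (s : Θ → ℝ)
    (hmeas : ∀ H : Set Θ, MeasurableSet (tangentSet s H))
    (H : Set Θ) (hH : H.Nonempty) :
    ev P s H = ⨆ θ₀ ∈ H, ev P s {θ₀} := by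
  simp only [ev]
  rw [measure_tangentSet_eq_iInf s P hmeas hH, iInf_subtype', ENNReal.sub_iInf, iSup_subtype']

theorem stmt_7 {Θ : Type*} [MeasurableSpace Θ] (P : Measure Θ) [IsProbabilityMeasure P]
    (s : Θ → ℝ) (hs : Measurable s)
    (hmeas : ∀ H : Set Θ, MeasurableSet (tangentSet s H))
    (H : Set Θ) (hH : H.Nonempty) :
    ev P s H = ⨆ θ₀ ∈ H, ev P s {θ₀} :=
  stmt_7_general P s hmeas H hH
end

section
/- The epistemic value satisfies 1 − ev(Θ∖H | x) ≤ P(H|x) for every hypothesis H: the posterior probability of T(Θ∖H) is at most the posterior probability of H. -/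
open MeasureTheory

theorem tangentSet_compl_subset {Θ : Type*} (s : Θ → ℝ) (H : Set Θ) :
    tangentSet s Hᶜ ⊆ H := fun θ hθ =>
  by_contra fun hθH => lt_irrefl (s θ) (hθ θ hθH)

theorem one_sub_ev_le_measure_tangentSet {Θ : Type*} [MeasurableSpace Θ] (P : Measure Θ)
    (s : Θ → ℝ) (H : Set Θ) : 1 - ev P s H ≤ P (tangentSet s H) :=
  tsub_tsub_le

theorem stmt_9_general {Θ : Type*} [MeasurableSpace Θ] (P : Measure Θ)
    (s : Θ → ℝ) (H : Set Θ) :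
    1 - ev P s Hᶜ ≤ P H :=
  (one_sub_ev_le_measure_tangentSet P s Hᶜ).trans (measure_mono (tangentSet_compl_subset s H))

theorem stmt_9 {Θ : Type*} [MeasurableSpace Θ] (P : Measure Θ) [IsProbabilityMeasure P]
    (s : Θ → ℝ) (H : Set Θ) :
    1 - ev P s Hᶜ ≤ P H :=
  stmt_9_general P s H
end
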